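/- Under the standing setup, let μ be a Borel probability measure on X whose support is an attractor. Then μ is an attracting measure if and only if for every m-absolutely continuous probability measure ν with ν(Basin(supp μ)) = 1, the pushforwards f^t ν converge weakly to μ as t → ∞. -/

import Mathlib

/-! Given an admissible neighbourhood `U` of `supp μ` and `ν` concentrated on the basin, choose a
closed neighbourhood `C ⊆ U` of `supp μ`. The sets `B n` of points whose orbit stays in `C` after
time `n` exhaust the basin, so `ν (B n) → 1`. Flowing `ν` conditioned on `B n` for time `n` gives
an `m`-absolutely continuous probability measure (condition (H) makes every `f t` nonsingular)
concentrated on `U`, whose pushforwards converge to `μ`; and the conditioned measures approximate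
`ν` in total variation. Conversely, the neighbourhood of `supp μ` inside its basin is admissible. -/

open MeasureTheory Filter Topology Set Metric
open scoped NNReal ENNReal

/-- The (topological) support of a measure. -/
def msupp {X : Type*} [TopologicalSpace X] [MeasurableSpace X] (μ : Measure X) : Set X :=
  {x | ∀ U : Set X, IsOpen U → x ∈ U → 0 < μ U}

/-- The basin of attraction of a set `A`. -/
def basinSet {X : Type*} [MetricSpace X] (f : ℝ → X → X) (A : Set X) : Set X :=
  {x | Tendsto (fun t : ℝ => infDist (f t x) A) atTop (𝓝 0)}

/-- `μ` is an attracting measure (w.r.t. the reference measure `m` and semiflow `f`):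
a compactly supported Borel probability measure whose support admits an open
neighbourhood `U` such that every `m`-absolutely continuous probability measure `ν`
with `ν U = 1` satisfies `f^t ν → μ` weakly as `t → ∞`. -/
def AttractingMeasure {X : Type*} [TopologicalSpace X] [MeasurableSpace X]
    (m : Measure X) (f : ℝ → X → X) (μ : Measure X) : Prop :=
  IsProbabilityMeasure μ ∧ IsCompact (msupp μ) ∧
    ∃ U : Set X, IsOpen U ∧ msupp μ ⊆ U ∧
      ∀ ν : Measure X, IsProbabilityMeasure ν → ν ≪ m → ν U = 1 →
        ∀ g : BoundedContinuousFunction X ℝ,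
          Tendsto (fun t : ℝ => ∫ x, g x ∂(ν.map (f t))) atTop (𝓝 (∫ x, g x ∂μ))

open scoped ProbabilityTheory BoundedContinuousFunction

section Conditioning

variable {X E : Type*} [MeasurableSpace X] {ν : Measure X} [IsProbabilityMeasure ν]
  [NormedAddCommGroup E] [NormedSpace ℝ E]

lemma dist_integral_le_dist_integral_cond_add {k : X → E} (hk : Integrable k ν) {G : ℝ}
    (hkG : ∀ x, ‖k x‖ ≤ G) {B : Set X} (hB : MeasurableSet B) {I : E} (hI : ‖I‖ ≤ G) :
    dist (∫ x, k x ∂ν) I ≤ dist (∫ x, k x ∂ν[|B]) I + 2 * G * ν.real Bᶜ := by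
  set J := ∫ x, k x ∂ν[|B]
  have hrest : ∫ x in B, k x ∂ν = ν.real B • J := by
    rw [← measure_smul_setAverage _ (measure_ne_top ν B), setAverage_eq']
    rfl
  have hcompl : ‖∫ x, k x ∂ν - ∫ x in B, k x ∂ν‖ ≤ ν.real Bᶜ * G :=
    norm_integral_sub_setIntegral_le (.of_forall hkG) hB hk
  have hsum : ν.real B + ν.real Bᶜ = 1 := probReal_add_probReal_compl hB
  have hdecomp : ∫ x, k x ∂ν - I =
      (∫ x, k x ∂ν - ∫ x in B, k x ∂ν) + ν.real B • (J - I) - ν.real Bᶜ • I := by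
    rw [hrest, smul_sub, ← sub_eq_of_eq_add' hsum.symm, sub_smul, one_smul]; abel
  have hB1 : ν.real B ≤ 1 := measureReal_le_one
  rw [dist_eq_norm, dist_eq_norm, hdecomp]
  calc _ ≤ ν.real Bᶜ * G + ν.real B * ‖J - I‖ + ν.real Bᶜ * G := by
        grw [norm_sub_le, norm_add_le, hcompl, norm_smul, norm_smul, Real.norm_of_nonneg
          measureReal_nonneg, Real.norm_of_nonneg measureReal_nonneg, hI]
    _ ≤ ‖J - I‖ + 2 * G * ν.real Bᶜ := by
        nlinarith [norm_nonneg (J - I)]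

lemma tendsto_integral_map_of_tendsto_integral_map_cond {ι β Y : Type*} [TopologicalSpace Y]
    [MeasurableSpace Y] [OpensMeasurableSpace Y] {l : Filter ι} {Φ : ι → X → Y}
    (hΦ : ∀ᶠ i in l, Measurable (Φ i)) (g : Y →ᵇ ℝ) {I : ℝ} (hI : ‖I‖ ≤ ‖g‖)
    {L : Filter β} [L.NeBot] {B : β → Set X} (hB : ∀ b, MeasurableSet (B b))
    (hB1 : Tendsto (fun b => ν (B b)) L (𝓝 1))
    (hcond : ∀ᶠ b in L, Tendsto (fun i => ∫ y, g y ∂((ν[|B b]).map (Φ i))) l (𝓝 I)) :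
    Tendsto (fun i => ∫ y, g y ∂(ν.map (Φ i))) l (𝓝 I) := by
  have hcompl : Tendsto (fun b => ν.real (B b)ᶜ) L (𝓝 0) := by
    have h := ((ENNReal.tendsto_toReal ENNReal.one_ne_top).comp hB1).const_sub 1
    simp only [ENNReal.toReal_one, sub_self] at h
    refine h.congr fun b => ?_
    rw [← probReal_add_probReal_compl (μ := ν) (hB b)]
    simp [Measure.real]
  rw [Metric.tendsto_nhds]
  intro ε hε
  obtain ⟨b, hb, hbε⟩ := (hcond.and (hcompl.eventually
    (gt_mem_nhds (show 0 < ε / (4 * (‖g‖ + 1)) by positivity)))).exists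
  filter_upwards [hΦ, Metric.tendsto_nhds.mp hb (ε / 2) (half_pos hε)] with i hΦi hi
  have hint := fun (κ : Measure X) => integral_map (μ := κ) hΦi.aemeasurable
    g.continuous.aestronglyMeasurable
  rw [hint] at hi ⊢
  calc _ ≤ dist (∫ x, g (Φ i x) ∂ν[|B b]) I + 2 * ‖g‖ * ν.real (B b)ᶜ :=
        dist_integral_le_dist_integral_cond_add ((g.integrable _).comp_measurable hΦi)
          (fun x => g.norm_coe_le_norm _) (hB b) hI
    _ < ε := by
        have : 2 * ‖g‖ * ν.real (B b)ᶜ ≤ ε / 2 := by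
          rw [lt_div_iff₀ (by positivity)] at hbε
          nlinarith [norm_nonneg g, measureReal_nonneg (μ := ν) (s := (B b)ᶜ)]
        linarith

end Conditioning

lemma map_absolutelyContinuous_self_of_forall_nhds {X : Type*} [TopologicalSpace X]
    [LindelofSpace X] [MeasurableSpace X] {m : Measure X} {φ : X → X} (hφ : Measurable φ)
    (h : ∀ x, ∃ V ∈ 𝓝 x, ∀ S, MeasurableSet S → m S = 0 → m (V ∩ φ ⁻¹' S) = 0) :
    m.map φ ≪ m := by
  choose V hV hnull using h
  obtain ⟨T, hT, hcover⟩ := countable_cover_nhds hV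
  refine Measure.AbsolutelyContinuous.mk fun S hS h0 => ?_
  have hpre : φ ⁻¹' S = ⋃ x ∈ T, V x ∩ φ ⁻¹' S := by
    rw [← iUnion₂_inter, hcover, univ_inter]
  rw [Measure.map_apply hφ hS, hpre]
  exact (measure_biUnion_null_iff hT).2 fun x _ => hnull x S hS h0

section Semiflow

variable {X : Type*} {f : ℝ → X → X}

lemma isClosed_setOf_forall_ge_mem [TopologicalSpace X] {C : Set X} (hC : IsClosed C) {T : ℝ}
    (hf : ∀ t ≥ T, Continuous (f t)) : IsClosed {x | ∀ t ≥ T, f t x ∈ C} := by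
  simp only [ofPred_forall]
  exact isClosed_iInter fun t => isClosed_iInter fun ht => hC.preimage (hf t ht)

lemma tendsto_measure_setOf_forall_ge_mem [MeasurableSpace X] {ν : Measure X}
    [IsProbabilityMeasure ν] {S C : Set X} (hS : ν S = 1)
    (hSC : ∀ x ∈ S, ∀ᶠ t in atTop, f t x ∈ C) :
    Tendsto (fun n : ℕ => ν {x | ∀ t ≥ (n : ℝ), f t x ∈ C}) atTop (𝓝 1) := by
  have hmono : Monotone fun n : ℕ => {x | ∀ t ≥ (n : ℝ), f t x ∈ C} :=
    fun a b hab x hx t ht => hx t (le_trans (Nat.cast_le.2 hab) ht)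
  have hcover : S ⊆ ⋃ n : ℕ, {x | ∀ t ≥ (n : ℝ), f t x ∈ C} := by
    intro x hx
    obtain ⟨T, hT⟩ := eventually_atTop.1 (hSC x hx)
    obtain ⟨n, hn⟩ := exists_nat_ge T
    exact mem_iUnion.2 ⟨n, fun t ht => hT t (hn.trans ht)⟩
  have hunion := tendsto_measure_iUnion_atTop (μ := ν) hmono
  rwa [prob_le_one.antisymm (hS ▸ measure_mono hcover)] at hunion

lemma eventually_mem_of_mem_basinSet [MetricSpace X] {A C : Set X} (hA : IsCompact A)
    (hne : A.Nonempty) (hC : C ∈ 𝓝ˢ A) {x : X} (hx : x ∈ basinSet f A) :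
    ∀ᶠ t in atTop, f t x ∈ C :=
  (tendsto_nhdsSet (f := fun t => f t x) hA hne).2 (fun _ hε => hx.eventually (gt_mem_nhds hε)) hC

lemma tendsto_integral_map_of_tendsto_integral_map_map [MeasurableSpace X]
    (hfadd : ∀ s t : ℝ, 0 ≤ s → 0 ≤ t → f (s + t) = f s ∘ f t)
    (hf : ∀ t, 0 ≤ t → Measurable (f t)) {s : ℝ} (hs : 0 ≤ s) (κ : Measure X) (g : X → ℝ)
    {I : ℝ} (h : Tendsto (fun t => ∫ x, g x ∂((κ.map (f s)).map (f t))) atTop (𝓝 I)) :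
    Tendsto (fun t => ∫ x, g x ∂(κ.map (f t))) atTop (𝓝 I) := by
  refine (h.comp (tendsto_atTop_add_const_right atTop (-s) tendsto_id)).congr' ?_
  filter_upwards [eventually_ge_atTop s] with t ht
  have hts : 0 ≤ t + -s := by linarith
  simp only [Function.comp_apply, id, Measure.map_map (hf _ hts) (hf s hs), ← hfadd _ _ hts hs,
    neg_add_cancel_right]

lemma tendsto_integral_map_cond_of_mapsTo [MeasurableSpace X] {m : Measure X}
    (hfadd : ∀ s t : ℝ, 0 ≤ s → 0 ≤ t → f (s + t) = f s ∘ f t)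
    (hf : ∀ t, 0 ≤ t → Measurable (f t)) (hnonsing : ∀ t, 0 ≤ t → m.map (f t) ≪ m)
    {U : Set X} (hU : MeasurableSet U) (g : X → ℝ) {I : ℝ}
    (hattr : ∀ κ : Measure X, IsProbabilityMeasure κ → κ ≪ m → κ U = 1 →
      Tendsto (fun t => ∫ x, g x ∂(κ.map (f t))) atTop (𝓝 I))
    {ν : Measure X} [IsFiniteMeasure ν] (hνm : ν ≪ m) {B : Set X} (hB : ν B ≠ 0) {s : ℝ}
    (hs : 0 ≤ s) (hBU : MapsTo (f s) B U) :
    Tendsto (fun t => ∫ x, g x ∂((ν[|B]).map (f t))) atTop (𝓝 I) := by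
  have : IsProbabilityMeasure ν[|B] := ProbabilityTheory.cond_isProbabilityMeasure hB
  have hU1 : (ν[|B]).map (f s) U = 1 := by
    rw [Measure.map_apply (hf s hs) hU]
    refine prob_le_one.antisymm ?_
    calc 1 = ν[|B] B := (ProbabilityTheory.cond_apply_self hB (measure_ne_top _ _)).symm
      _ ≤ ν[|B] (f s ⁻¹' U) := measure_mono hBU
  have hac : (ν[|B]).map (f s) ≪ m :=
    ((ProbabilityTheory.cond_absolutelyContinuous.trans hνm).map (hf s hs)).trans (hnonsing s hs)
  exact tendsto_integral_map_of_tendsto_integral_map_map hfadd hf hs _ g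
    (hattr _ (Measure.isProbabilityMeasure_map (hf s hs).aemeasurable) hac hU1)

end Semiflow

theorem stmt_11_general {X : Type*} [MetricSpace X] [TopologicalSpace.SeparableSpace X]
    [MeasurableSpace X] [BorelSpace X]
    (m : Measure X)
    (f : ℝ → X → X)
    (hfadd : ∀ s t : ℝ, 0 ≤ s → 0 ≤ t → f (s + t) = f s ∘ f t)
    (hcont : ContinuousOn (fun p : ℝ × X => f p.1 p.2) (Set.Ici 0 ×ˢ Set.univ))
    (hcover : ∀ x : X, ∃ V : Set X, IsOpen V ∧ x ∈ V ∧
      ∀ t : ℝ, 0 ≤ t → ∃ D : ℝ≥0, ∀ S : Set X, MeasurableSet S →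
        m (V ∩ f t ⁻¹' S) ≤ (D : ℝ≥0∞) * m S)
    (μ : Measure X) [IsProbabilityMeasure μ]
    (hne : (msupp μ).Nonempty) (hcomp : IsCompact (msupp μ))
    (hattr : ∃ V : Set X, IsOpen V ∧ msupp μ ⊆ V ∧ V ⊆ basinSet f (msupp μ)) :
    AttractingMeasure m f μ ↔
      ∀ ν : Measure X, IsProbabilityMeasure ν → ν ≪ m →
        ν (basinSet f (msupp μ)) = 1 →
        ∀ g : BoundedContinuousFunction X ℝ,
          Tendsto (fun t : ℝ => ∫ x, g x ∂(ν.map (f t))) atTop (𝓝 (∫ x, g x ∂μ)) := by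
  have hft : ∀ t, 0 ≤ t → Continuous (f t) := fun t ht =>
    hcont.comp_continuous (continuous_const.prodMk continuous_id) fun _ => ⟨ht, trivial⟩
  have : SecondCountableTopology X := UniformSpace.secondCountable_of_separable X
  have hnonsing (t : ℝ) (ht : 0 ≤ t) : m.map (f t) ≪ m := by
    refine map_absolutelyContinuous_self_of_forall_nhds (hft t ht).measurable fun x => ?_
    obtain ⟨V, hVo, hxV, hD⟩ := hcover x
    obtain ⟨D, hD⟩ := hD t ht
    exact ⟨V, hVo.mem_nhds hxV, fun S hS h0 => nonpos_iff_eq_zero.1 (by simpa [h0] using hD S hS)⟩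
  constructor
  · rintro ⟨-, -, U, hUo, hAU, hU⟩ ν hν hνm hbasin g
    obtain ⟨δ, hδ, hδU⟩ := hcomp.exists_cthickening_subset_open hUo hAU
    set B : ℕ → Set X := fun n => {x | ∀ t ≥ (n : ℝ), f t x ∈ cthickening δ (msupp μ)}
    have hB1 : Tendsto (fun n => ν (B n)) atTop (𝓝 1) :=
      tendsto_measure_setOf_forall_ge_mem hbasin fun x hx =>
        eventually_mem_of_mem_basinSet hcomp hne (cthickening_mem_nhdsSet _ hδ) hx
    have hBm (n : ℕ) : MeasurableSet (B n) :=
      (isClosed_setOf_forall_ge_mem isClosed_cthickening fun t ht =>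
        hft t (n.cast_nonneg.trans ht)).measurableSet
    refine tendsto_integral_map_of_tendsto_integral_map_cond
      ((eventually_ge_atTop 0).mono fun t ht => (hft t ht).measurable) g
      (g.norm_integral_le_norm μ) hBm hB1 ?_
    filter_upwards [hB1.eventually_ne one_ne_zero] with n hn
    exact tendsto_integral_map_cond_of_mapsTo hfadd (fun t ht => (hft t ht).measurable) hnonsing
      hUo.measurableSet g (fun κ hκ hκm hκU => hU κ hκ hκm hκU g) hνm hn n.cast_nonneg
      fun x hx => hδU (hx n le_rfl)
  · intro h
    obtain ⟨V, hVo, hAV, hVbasin⟩ := hattr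
    exact ⟨inferInstance, hcomp, V, hVo, hAV, fun ν hν hνm hνV =>
      h ν hν hνm (prob_le_one.antisymm (hνV ▸ measure_mono hVbasin))⟩

/-- Under the standing setup, let `μ` be a Borel probability measure
whose support is an attractor. Then `μ` is attracting if and only if for every
`m`-absolutely continuous probability measure `ν` with `ν (Basin(supp μ)) = 1`, the
pushforwards `f^t ν` converge weakly to `μ` as `t → ∞`. -/
theorem stmt_11 {X : Type*} [MetricSpace X] [TopologicalSpace.SeparableSpace X]
    [MeasurableSpace X] [BorelSpace X]
    (m : Measure X) [IsLocallyFiniteMeasure m] [m.IsOpenPosMeasure]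
    (f : ℝ → X → X)
    (hf0 : f 0 = id)
    (hfadd : ∀ s t : ℝ, 0 ≤ s → 0 ≤ t → f (s + t) = f s ∘ f t)
    (hcont : ContinuousOn (fun p : ℝ × X => f p.1 p.2) (Set.Ici 0 ×ˢ Set.univ))
    (hcover : ∀ x : X, ∃ V : Set X, IsOpen V ∧ x ∈ V ∧
      ∀ t : ℝ, 0 ≤ t → ∃ D : ℝ≥0, ∀ S : Set X, MeasurableSet S →
        m (V ∩ f t ⁻¹' S) ≤ (D : ℝ≥0∞) * m S)
    (μ : Measure X) [IsProbabilityMeasure μ]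
    (hne : (msupp μ).Nonempty) (hcomp : IsCompact (msupp μ))
    (hinv : ∀ t : ℝ, 0 ≤ t → f t '' (msupp μ) = msupp μ)
    (hattr : ∃ V : Set X, IsOpen V ∧ msupp μ ⊆ V ∧ V ⊆ basinSet f (msupp μ)) :
    AttractingMeasure m f μ ↔
      ∀ ν : Measure X, IsProbabilityMeasure ν → ν ≪ m →
        ν (basinSet f (msupp μ)) = 1 →
        ∀ g : BoundedContinuousFunction X ℝ,
          Tendsto (fun t : ℝ => ∫ x, g x ∂(ν.map (f t))) atTop (𝓝 (∫ x, g x ∂μ)) :=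
  stmt_11_general m f hfadd hcont hcover μ hne hcomp hattr
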